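/- Let A be a nonzero real m×n matrix with m > n, let θ_s, θ_x ∈ (0,1], and fix τ₀ > 0. For each noise variance v > 0, let (τ_s(v), τ_x(v)) be the unique positive solution of the fixed-point equations 1/τ_s = (‖A‖_F²/m)τ_x + v and 1/τ_x = (‖A‖_F²/n)τ_s + 1/τ₀, and define γ(v) := (1/(‖A‖_F² θ_s θ_x)) · (2/τ_x(v) − θ_x/τ₀) · (2/τ_s(v) − θ_s v). Then lim_{v → 0⁺} γ(v) = 2((2−θ_s)m + θ_s n)/(θ_s θ_x m n). (The analogous statement with the roles of (m, θ_s) and (n, θ_x) exchanged holds when m < n.) -/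

import Mathlib

/-!
Write `a = ‖A‖_F²/m`, `b = ‖A‖_F²/n` and `c = 1/τ₀`, so `a < b` because `n < m`.
Eliminating `τ_s` from the fixed-point equations gives `v (1 - c τ_x) = (b - a) τ_x + a c τ_x²`,
hence `(b - a) τ_x ≤ v`, so `τ_x(v) → 0` and `v / τ_x(v) = ((b - a) + a c τ_x)/(1 - c τ_x) → b - a`.
Since `2/τ_s = 2(a τ_x + v)`, the threshold is
`γ(v) = (2 - θ_x c τ_x) (2a + (2 - θ_s) v/τ_x) / (‖A‖_F² θ_s θ_x)`, and the limit can be read off.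
-/

open Matrix Filter

/-- Squared Frobenius norm of a real matrix. -/
noncomputable def frobSq {m n : ℕ} (A : Matrix (Fin m) (Fin n) ℝ) : ℝ :=
  ∑ i, ∑ j, (A i j) ^ 2

open Topology

lemma frobSq_pos {m n : ℕ} {A : Matrix (Fin m) (Fin n) ℝ} (hA : A ≠ 0) : 0 < frobSq A := by
  obtain ⟨i, j, hij⟩ : ∃ i j, A i j ≠ 0 := by
    by_contra! h
    exact hA (Matrix.ext h)
  refine Finset.sum_pos' (fun _ _ => Finset.sum_nonneg fun _ _ => sq_nonneg _)
    ⟨i, Finset.mem_univ i, ?_⟩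
  exact Finset.sum_pos' (fun _ _ => sq_nonneg _) ⟨j, Finset.mem_univ j, by positivity⟩

section FixedPoint

variable {a b c v s t : ℝ}

lemma fixedPoint_one_sub_eq (ht : t ≠ 0) (h₂ : 1 / t = b * s + c) : 1 - c * t = b * s * t := by
  field_simp at h₂
  linarith

lemma fixedPoint_noise_mul_eq (hs : s ≠ 0) (ht : t ≠ 0)
    (h₁ : 1 / s = a * t + v) (h₂ : 1 / t = b * s + c) :
    v * (1 - c * t) = (b - a) * t + a * c * t ^ 2 := by
  have hst : (a * t + v) * s = 1 := by rw [← h₁]; field_simp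
  linear_combination (a * t + v) * fixedPoint_one_sub_eq ht h₂ + b * t * hst

variable {τs τx : ℝ → ℝ}
  (hpos : ∀ v : ℝ, 0 < v → 0 < τs v ∧ 0 < τx v)
  (hfix : ∀ v : ℝ, 0 < v → 1 / τs v = a * τx v + v ∧ 1 / τx v = b * τs v + c)
include hpos hfix

lemma tendsto_fixedPoint_zero (ha : 0 ≤ a) (hab : a < b) (hc : 0 ≤ c) :
    Tendsto τx (𝓝[>] 0) (𝓝 0) := by
  have hbound : Tendsto (fun v : ℝ => v / (b - a)) (𝓝[>] 0) (𝓝 0) := by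
    simpa using ((tendsto_id (x := 𝓝 (0 : ℝ))).div_const (b - a)).mono_left nhdsWithin_le_nhds
  refine tendsto_of_tendsto_of_tendsto_of_le_of_le' tendsto_const_nhds hbound ?_ ?_ <;>
    filter_upwards [self_mem_nhdsWithin] with v (hv : 0 < v)
  · exact (hpos v hv).2.le
  · obtain ⟨hs, ht⟩ := hpos v hv
    have key := fixedPoint_noise_mul_eq hs.ne' ht.ne' (hfix v hv).1 (hfix v hv).2
    rw [le_div_iff₀ (sub_pos.2 hab)]
    nlinarith [mul_nonneg (mul_nonneg ha hc) (sq_nonneg (τx v)),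
      mul_nonneg hv.le (mul_nonneg hc ht.le)]

lemma tendsto_noise_div_fixedPoint (ha : 0 ≤ a) (hab : a < b) (hc : 0 ≤ c) :
    Tendsto (fun v => v / τx v) (𝓝[>] 0) (𝓝 (b - a)) := by
  have hcont : ContinuousAt (fun t => ((b - a) + a * c * t) / (1 - c * t)) 0 :=
    ContinuousAt.div (by fun_prop) (by fun_prop) (by simp)
  have hlim := hcont.tendsto.comp (tendsto_fixedPoint_zero hpos hfix ha hab hc)
  simp only [mul_zero, add_zero, sub_zero, div_one] at hlim
  refine hlim.congr' ?_
  filter_upwards [self_mem_nhdsWithin] with v (hv : 0 < v)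
  obtain ⟨hs, ht⟩ := hpos v hv
  have hct : 1 - c * τx v ≠ 0 := by
    rw [fixedPoint_one_sub_eq ht.ne' (hfix v hv).2]
    exact (mul_pos (mul_pos (ha.trans_lt hab) hs) ht).ne'
  have key := fixedPoint_noise_mul_eq hs.ne' ht.ne' (hfix v hv).1 (hfix v hv).2
  simp only [Function.comp_apply]
  field_simp
  linear_combination -key

end FixedPoint

theorem ggamp_gamma_limit_general {m n : ℕ}
    (A : Matrix (Fin m) (Fin n) ℝ) (hA : A ≠ 0) (hmn : n < m)
    (θs θx : ℝ)
    (τ0 : ℝ) (hτ0 : 0 < τ0)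
    (τs τx : ℝ → ℝ)
    (hpos : ∀ v : ℝ, 0 < v → 0 < τs v ∧ 0 < τx v)
    (hfix : ∀ v : ℝ, 0 < v →
      1 / τs v = (frobSq A / m) * τx v + v ∧
      1 / τx v = (frobSq A / n) * τs v + 1 / τ0) :
    Tendsto
      (fun v : ℝ =>
        1 / (frobSq A * θs * θx) * (2 / τx v - θx / τ0) * (2 / τs v - θs * v))
      (nhdsWithin 0 (Set.Ioi 0))
      (nhds (2 * ((2 - θs) * m + θs * n) / (θs * θx * m * n))) := by
  have hF := frobSq_pos hA
  have hn : 0 < n := Nat.pos_of_ne_zero fun h => hA (by subst h; exact Subsingleton.elim _ _)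
  have hnR : (0 : ℝ) < n := by exact_mod_cast hn
  have hmR : (0 : ℝ) < m := by exact_mod_cast hn.trans hmn
  have ha : 0 ≤ frobSq A / m := by positivity
  have hab : frobSq A / m < frobSq A / n := div_lt_div_of_pos_left hF hnR (by exact_mod_cast hmn)
  have hc : 0 ≤ 1 / τ0 := by positivity
  have hθτx := (tendsto_fixedPoint_zero hpos hfix ha hab hc).const_mul (θx / τ0)
  have hratio := tendsto_noise_div_fixedPoint hpos hfix ha hab hc
  have hlim := ((tendsto_const_nhds (x := (2 : ℝ)).sub hθτx).mul
    ((tendsto_const_nhds (x := 2 * (frobSq A / m))).add (hratio.const_mul (2 - θs)))).const_mul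
    (1 / (frobSq A * θs * θx))
  convert hlim.congr' ?_ using 2
  · field_simp
    ring
  · filter_upwards [self_mem_nhdsWithin] with v (hv : 0 < v)
    have ht := (hpos v hv).2.ne'
    have hs : 2 / τs v = 2 * (frobSq A / m * τx v + v) := by rw [← (hfix v hv).1]; ring
    rw [hs]
    field_simp
    ring

/-- **Limit lemma (Appendix C).** For `m > n`, as the noise variance `v → 0⁺`,
the stability threshold `γ(v)` computed at the fixed-point stepsizes
`(τ_s(v), τ_x(v))` tends to `2((2−θ_s)m + θ_s n)/(θ_s θ_x m n)`. -/
theorem ggamp_gamma_limit {m n : ℕ}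
    (A : Matrix (Fin m) (Fin n) ℝ) (hA : A ≠ 0) (hmn : n < m)
    (θs θx : ℝ) (hθs : θs ∈ Set.Ioc (0 : ℝ) 1) (hθx : θx ∈ Set.Ioc (0 : ℝ) 1)
    (τ0 : ℝ) (hτ0 : 0 < τ0)
    (τs τx : ℝ → ℝ)
    (hpos : ∀ v : ℝ, 0 < v → 0 < τs v ∧ 0 < τx v)
    (hfix : ∀ v : ℝ, 0 < v →
      1 / τs v = (frobSq A / m) * τx v + v ∧
      1 / τx v = (frobSq A / n) * τs v + 1 / τ0) :
    Tendsto
      (fun v : ℝ =>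
        1 / (frobSq A * θs * θx) * (2 / τx v - θx / τ0) * (2 / τs v - θs * v))
      (nhdsWithin 0 (Set.Ioi 0))
      (nhds (2 * ((2 - θs) * m + θs * n) / (θs * θx * m * n))) :=
  ggamp_gamma_limit_general A hA hmn θs θx τ0 hτ0 τs τx hpos hfix
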